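/- Let M_1 be a d_1×d_1 real matrix and M_2 a d_2×d_2 real matrix, both with all complex eigenvalues of modulus strictly less than 1, and let u_1 ∈ ℝ^{d_1}, u_2 ∈ ℝ^{d_2}. Let M be the block-diagonal matrix with blocks M_1 and M_2, and u = (u_1, u_2) ∈ ℝ^{d_1+d_2}. If the set of uniqueness 𝒰_{M_1} (with respect to (M_1,u_1)) has positive Hausdorff dimension, or 𝒰_{M_2} (with respect to (M_2,u_2)) has positive Hausdorff dimension, then the set of uniqueness 𝒰_M (with respect to (M,u)) has positive Hausdorff dimension. -/

import Mathlib

open Matrix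
open scoped NNReal ENNReal

/-!
Projecting `ℝ^{d₁+d₂}` onto one block is 1-Lipschitz and sends the point with address `a` for
`(M, u)` to the point with address `a` for that block. Hence an address that is unique for the
block lifts to an address that is unique for `(M, u)`, so the projection of `𝒰_M` contains the
block's set of uniqueness, and Lipschitz maps do not increase Hausdorff dimension. The series
converge because, by Gelfand's formula, `‖Mᵢᵏ‖` decays geometrically.
-/

noncomputable def uniqSet {ι : Type*} [Fintype ι] [DecidableEq ι]
    (M : Matrix ι ι ℝ) (u : ι → ℝ) : Set (ι → ℝ) :=
  {x | ∃ a : ℕ → ℝ, (∀ k, a k = -1 ∨ a k = 1) ∧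
    x = ∑' k : ℕ, a k • (M ^ k).mulVec u ∧
    ∀ b : ℕ → ℝ, (∀ k, b k = -1 ∨ b k = 1) →
      (∑' k : ℕ, b k • (M ^ k).mulVec u) = x → b = a}

theorem spectralRadius_lt_one_of_forall_norm_lt_one {A : Type*} [NormedRing A]
    [NormedAlgebra ℂ A] [CompleteSpace A] {a : A} (h : ∀ z ∈ spectrum ℂ a, ‖z‖ < 1) :
    spectralRadius ℂ a < 1 := by
  rcases (spectrum ℂ a).eq_empty_or_nonempty with hempty | hne
  · simp [spectralRadius, hempty]
  · have := spectrum.spectralRadius_lt_of_forall_lt_of_nonempty hne (r := 1)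
      fun z hz => by simpa [← NNReal.coe_lt_coe] using h z hz
    simpa using this

theorem summable_norm_pow_of_spectralRadius_lt_one {A : Type*} [NormedRing A]
    [NormedAlgebra ℂ A] [CompleteSpace A] {a : A} (h : spectralRadius ℂ a < 1) :
    Summable fun n : ℕ => ‖a ^ n‖ := by
  obtain ⟨r, hρr, hr1⟩ := ENNReal.lt_iff_exists_nnreal_btwn.mp h
  have hroot : ∀ᶠ n : ℕ in Filter.atTop, (‖a ^ n‖₊ : ℝ≥0∞) ^ (1 / n : ℝ) < r :=
    (spectrum.pow_nnnorm_pow_one_div_tendsto_nhds_spectralRadius a).eventually_lt_const hρr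
  have hgeom : ∀ᶠ n : ℕ in Filter.atTop, ‖‖a ^ n‖‖ ≤ (r : ℝ) ^ n := by
    filter_upwards [hroot, Filter.eventually_ge_atTop 1] with n hn hn1
    have hn0 : (n : ℝ) ≠ 0 := by positivity
    have := ENNReal.rpow_le_rpow hn.le (z := n) (by positivity)
    rw [← ENNReal.rpow_mul, one_div_mul_cancel hn0, ENNReal.rpow_one, ENNReal.rpow_natCast,
      ← ENNReal.coe_pow, ENNReal.coe_le_coe] at this
    simpa using (NNReal.coe_le_coe.mpr this)
  exact Summable.of_norm_bounded_eventually_nat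
    (summable_geometric_of_lt_one r.2 (by exact_mod_cast hr1)) hgeom

section LinftyOpNorm

attribute [local instance] Matrix.linftyOpNormedAddCommGroup Matrix.linftyOpNormedRing
  Matrix.linftyOpNormedAlgebra

theorem Matrix.linfty_opNorm_map_ofReal {m n : Type*} [Fintype m] [Fintype n]
    (A : Matrix m n ℝ) : ‖A.map (algebraMap ℝ ℂ)‖ = ‖A‖ := by
  simp [Matrix.linfty_opNorm_def]

theorem Matrix.summable_smul_pow_mulVec {ι : Type*} [Fintype ι] [DecidableEq ι]
    (M : Matrix ι ι ℝ) (hM : ∀ κ ∈ spectrum ℂ (M.map (algebraMap ℝ ℂ)), ‖κ‖ < 1)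
    (u : ι → ℝ) {a : ℕ → ℝ} (ha : ∀ k, ‖a k‖ ≤ 1) :
    Summable fun k => a k • (M ^ k) *ᵥ u := by
  have : CompleteSpace (Matrix ι ι ℂ) := FiniteDimensional.complete ℂ _
  have hpow : ∀ n : ℕ, ‖M ^ n‖ = ‖M.map (algebraMap ℝ ℂ) ^ n‖ := fun n => by
    rw [← RingHom.mapMatrix_apply, ← map_pow, RingHom.mapMatrix_apply,
      linfty_opNorm_map_ofReal]
  have hsum : Summable fun n : ℕ => ‖M ^ n‖ := by
    simpa only [hpow] using summable_norm_pow_of_spectralRadius_lt_one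
      (spectralRadius_lt_one_of_forall_norm_lt_one hM)
  refine Summable.of_norm_bounded (hsum.mul_right ‖u‖) fun k => ?_
  calc ‖a k • (M ^ k) *ᵥ u‖ = ‖a k‖ * ‖(M ^ k) *ᵥ u‖ := norm_smul _ _
    _ ≤ 1 * (‖M ^ k‖ * ‖u‖) :=
      mul_le_mul (ha k) (linfty_opNorm_mulVec _ _) (norm_nonneg _) zero_le_one
    _ = ‖M ^ k‖ * ‖u‖ := one_mul _

end LinftyOpNorm

theorem Summable.tsum_comp_right {ι κ α : Type*} [AddCommMonoid α] [TopologicalSpace α]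
    [T2Space α] {g : ℕ → ι → α} (hg : Summable g) (f : κ → ι) :
    (∑' k, g k) ∘ f = ∑' k, g k ∘ f := by
  have hgf : Summable fun k => g k ∘ f := Pi.summable.2 fun j => Pi.summable.1 hg (f j)
  ext j
  rw [Function.comp_apply, tsum_apply hg, tsum_apply hgf]
  rfl

theorem LipschitzWith.comp_right {ι κ α : Type*} [Fintype ι] [Fintype κ] [PseudoEMetricSpace α]
    (f : κ → ι) : LipschitzWith 1 fun x : ι → α => x ∘ f :=
  LipschitzWith.of_edist_le fun x y => edist_pi_le_iff.2 fun j => edist_le_pi_edist x y (f j)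

section Projection

variable {ι κ : Type*} [Fintype ι] [DecidableEq ι] [Fintype κ] [DecidableEq κ]
  {M : Matrix ι ι ℝ} {u : ι → ℝ} {M' : Matrix κ κ ℝ} {u' : κ → ℝ} {f : κ → ι}

theorem uniqSet_subset_image_comp_right (hcomp : ∀ k, ((M ^ k) *ᵥ u) ∘ f = (M' ^ k) *ᵥ u')
    (hsum : ∀ a : ℕ → ℝ, (∀ k, a k = -1 ∨ a k = 1) → Summable fun k => a k • (M ^ k) *ᵥ u) :
    uniqSet M' u' ⊆ (· ∘ f) '' uniqSet M u := by
  have hproj : ∀ a : ℕ → ℝ, (∀ k, a k = -1 ∨ a k = 1) →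
      (∑' k, a k • (M ^ k) *ᵥ u) ∘ f = ∑' k, a k • (M' ^ k) *ᵥ u' := fun a ha => by
    simp only [(hsum a ha).tsum_comp_right f, ← hcomp]
    rfl
  rintro x ⟨a, ha, rfl, huniq⟩
  refine ⟨_, ⟨a, ha, rfl, fun b hb hba => huniq b hb ?_⟩, hproj a ha⟩
  rw [← hproj b hb, hba, hproj a ha]

theorem dimH_uniqSet_pos_of_comp_right (hcomp : ∀ k, ((M ^ k) *ᵥ u) ∘ f = (M' ^ k) *ᵥ u')
    (hsum : ∀ a : ℕ → ℝ, (∀ k, a k = -1 ∨ a k = 1) → Summable fun k => a k • (M ^ k) *ᵥ u)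
    (hpos : 0 < dimH (uniqSet M' u')) : 0 < dimH (uniqSet M u) :=
  hpos.trans_le <| (dimH_mono (uniqSet_subset_image_comp_right hcomp hsum)).trans <|
    (LipschitzWith.comp_right f).dimH_image_le _

end Projection

theorem Summable.sumElim {α β γ : Type*} [AddCommMonoid γ] [TopologicalSpace γ]
    {f : ℕ → α → γ} {g : ℕ → β → γ} (hf : Summable f) (hg : Summable g) :
    Summable fun k => Sum.elim (f k) (g k) :=
  Pi.summable.2 fun
    | .inl i => Pi.summable.1 hf i
    | .inr i => Pi.summable.1 hg i

theorem Matrix.fromBlocks_diagonal_pow_mulVec_sumElim {m n α : Type*} [Fintype m] [Fintype n]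
    [DecidableEq m] [DecidableEq n] [Semiring α] (A : Matrix m m α) (D : Matrix n n α)
    (u : m → α) (v : n → α) (k : ℕ) : (fromBlocks A 0 0 D ^ k) *ᵥ Sum.elim u v = Sum.elim ((A ^ k) *ᵥ u) ((D ^ k) *ᵥ v) := by
  rw [fromBlocks_diagonal_pow, fromBlocks_mulVec]
  simp

/-- For the block-diagonal matrix `M = diag(M₁, M₂)` and `u = (u₁, u₂)`,
if `𝒰_{M₁}` or `𝒰_{M₂}` has positive Hausdorff dimension, then so does `𝒰_M`. -/
theorem stmt_10 (d₁ d₂ : ℕ)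
    (M₁ : Matrix (Fin d₁) (Fin d₁) ℝ) (M₂ : Matrix (Fin d₂) (Fin d₂) ℝ)
    (h1 : ∀ κ ∈ spectrum ℂ (M₁.map (algebraMap ℝ ℂ)), ‖κ‖ < 1)
    (h2 : ∀ κ ∈ spectrum ℂ (M₂.map (algebraMap ℝ ℂ)), ‖κ‖ < 1)
    (u₁ : Fin d₁ → ℝ) (u₂ : Fin d₂ → ℝ)
    (hpos : 0 < dimH (uniqSet M₁ u₁) ∨ 0 < dimH (uniqSet M₂ u₂)) :
    0 < dimH (uniqSet (Matrix.fromBlocks M₁ 0 0 M₂) (Sum.elim u₁ u₂)) := by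
  have hblock := fromBlocks_diagonal_pow_mulVec_sumElim M₁ M₂ u₁ u₂
  have hsum (a : ℕ → ℝ) (ha : ∀ k, a k = -1 ∨ a k = 1) :
      Summable fun k => a k • (fromBlocks M₁ 0 0 M₂ ^ k) *ᵥ Sum.elim u₁ u₂ := by
    have hnorm (k : ℕ) : ‖a k‖ ≤ 1 := by rcases ha k with h | h <;> simp [h]
    refine ((summable_smul_pow_mulVec M₁ h1 u₁ hnorm).sumElim
      (summable_smul_pow_mulVec M₂ h2 u₂ hnorm)).congr fun k => ?_
    rw [hblock]
    ext (i | i) <;> rfl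
  rcases hpos with hpos | hpos
  · exact dimH_uniqSet_pos_of_comp_right (fun k => by rw [hblock, Sum.elim_comp_inl]) hsum hpos
  · exact dimH_uniqSet_pos_of_comp_right (fun k => by rw [hblock, Sum.elim_comp_inr]) hsum hpos
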